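/- arXiv:1302.5991 — 2 statements merged into one kernel-verified Lean document; each statement's English description precedes it below -/
import Mathlib

section
/- If N = q^k * n^2 is an odd perfect number in Eulerian form, then n < q if and only if N < q^3. -/
/-!
Since `q ^ k` and `n ^ 2` are coprime and `σ(q ^ k) ≡ 1 [MOD q]`, perfection forces
`σ(q ^ k) ∣ 2 n ^ 2`, hence `q ^ k < σ(q ^ k) ≤ 2 n ^ 2`. If `n < q` this gives
`q ^ k < 2 q ^ 2 ≤ q ^ 3`, so `k < 3`, i.e. `k = 1`, and `N = q n ^ 2 < q ^ 3`.
Conversely, if `q ≤ n` then `q ^ 3 ≤ q ^ k n ^ 2 = N`.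
-/

/-- The sum-of-divisors function. -/
def sigma (n : ℕ) : ℕ := ∑ d ∈ n.divisors, d

/-- The abundancy index as a rational number. -/
noncomputable def Iq (x : ℕ) : ℚ := (sigma x : ℚ) / x

/-- The abundancy index as a real number. -/
noncomputable def Ir (x : ℕ) : ℝ := (sigma x : ℝ) / x

open Finset

lemma sigma_mul_of_coprime {a b : ℕ} (h : a.Coprime b) : sigma (a * b) = sigma a * sigma b :=
  h.sum_divisors_mul

lemma lt_sigma {n : ℕ} (hn : 1 < n) : n < sigma n := by
  have hsub : ({1, n} : Finset ℕ) ⊆ n.divisors := by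
    intro d hd
    rcases mem_insert.mp hd with rfl | hd
    · exact Nat.one_mem_divisors.mpr (by omega)
    · rw [mem_singleton.mp hd]
      exact Nat.mem_divisors_self n (by omega)
  calc n < ∑ d ∈ {1, n}, d := by rw [sum_pair hn.ne]; omega
    _ ≤ sigma n := sum_le_sum_of_subset hsub

lemma coprime_sigma_prime_pow {p : ℕ} (hp : p.Prime) (k : ℕ) : p.Coprime (sigma (p ^ k)) := by
  have h : sigma (p ^ k) = 1 + p * ∑ i ∈ range k, p ^ i := by
    rw [sigma, Nat.sum_divisors_prime_pow hp, geom_sum_succ, add_comm]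
  rw [h, Nat.coprime_add_mul_left_right]
  exact Nat.coprime_one_right p

lemma sigma_dvd_two_mul_of_perfect {a b : ℕ} (hab : a.Coprime b) (ha : a.Coprime (sigma a))
    (hperf : sigma (a * b) = 2 * (a * b)) : sigma a ∣ 2 * b := by
  have h : sigma a ∣ a * (2 * b) :=
    ⟨sigma b, by rw [← sigma_mul_of_coprime hab, hperf]; ring⟩
  exact ha.symm.dvd_of_dvd_mul_left h

lemma prime_pow_lt_two_mul_sq_of_perfect {q k n : ℕ} (hq : q.Prime) (hk : k ≠ 0)
    (hn : n ≠ 0) (hco : q.Coprime n) (hperf : sigma (q ^ k * n ^ 2) = 2 * (q ^ k * n ^ 2)) :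
    q ^ k < 2 * n ^ 2 := by
  have hdvd : sigma (q ^ k) ∣ 2 * n ^ 2 :=
    sigma_dvd_two_mul_of_perfect (hco.pow k 2) ((coprime_sigma_prime_pow hq k).pow_left k) hperf
  exact (lt_sigma (Nat.one_lt_pow hk hq.one_lt)).trans_le (Nat.le_of_dvd (by positivity) hdvd)

theorem stmt6_general (q k n N : ℕ)
    (hq : Nat.Prime q) (hk4 : k % 4 = 1)
    (hco : Nat.Coprime q n) (hN : N = q ^ k * n ^ 2)
    (hperf : sigma N = 2 * N) :
    n < q ↔ N < q ^ 3 := by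
  subst hN
  constructor
  · intro hnq
    rcases Nat.eq_zero_or_pos n with rfl | hn
    · simp [hq.pos]
    have hk : k = 1 := by
      by_contra hk
      have hqk : q ^ 3 ≤ q ^ k := Nat.pow_le_pow_right hq.pos (by omega)
      have hlt := prime_pow_lt_two_mul_sq_of_perfect hq (by omega) hn.ne' hco hperf
      have hq2 : 2 * q ^ 2 ≤ q ^ 3 := by nlinarith [hq.two_le]
      nlinarith
    subst hk
    calc q ^ 1 * n ^ 2 < q ^ 1 * q ^ 2 :=
          Nat.mul_lt_mul_of_pos_left (Nat.pow_lt_pow_left hnq two_ne_zero) (pow_pos hq.pos 1)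
      _ = q ^ 3 := by ring
  · intro hlt
    by_contra! hqn
    have : q ^ 3 ≤ q ^ k * n ^ 2 :=
      calc q ^ 3 = q ^ 1 * q ^ 2 := by ring
        _ ≤ q ^ k * n ^ 2 :=
          Nat.mul_le_mul (Nat.pow_le_pow_right hq.pos (by omega)) (Nat.pow_le_pow_left hqn 2)
    omega

theorem stmt6 (q k n N : ℕ)
    (hq : Nat.Prime q) (hq4 : q % 4 = 1) (hk4 : k % 4 = 1)
    (hco : Nat.Coprime q n) (hN : N = q ^ k * n ^ 2)
    (hodd : Odd N) (hperf : sigma N = 2 * N) :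
    n < q ↔ N < q ^ 3 :=
  stmt6_general q k n N hq hk4 hco hN hperf
end

section
/- If N = q^k * n^2 is an odd perfect number in Eulerian form with k = 1, then 1 < I(q) ≤ 6/5 < √(5/3) < I(n) < 2, where I(x) = σ(x)/x. -/
/-!
For k = 1 the perfect-number equation σ(q n²) = 2 q n² splits, by multiplicativity, as
I(q) · I(n²) = 2. Since q ≡ 1 (mod 4) forces q ≥ 5, I(q) = 1 + 1/q lies in (1, 6/5], hence
I(n²) lies in [5/3, 2). The submultiplicativity σ(n²) < σ(n)², strict because the divisor n of n²
arises both as n · 1 and as 1 · n, gives I(n)² > I(n²) ≥ 5/3, while I(n) ≤ I(n²) < 2.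
-/

open Finset

lemma sigma_prime {p : ℕ} (hp : p.Prime) : sigma p = p + 1 := by
  rw [sigma, hp.divisors, sum_pair hp.one_lt.ne, add_comm]

lemma Nat.Coprime.sigma_mul {m n : ℕ} (h : m.Coprime n) : sigma (m * n) = sigma m * sigma n :=
  h.sum_divisors_mul

lemma mul_sigma_le_sigma_mul (m : ℕ) {n : ℕ} (hn : n ≠ 0) : n * sigma m ≤ sigma (m * n) := by
  have hinj : Set.InjOn (· * n) (m.divisors : Set ℕ) := fun a _ b _ h =>
    Nat.eq_of_mul_eq_mul_right (Nat.pos_of_ne_zero hn) h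
  have hsub : m.divisors.image (· * n) ⊆ (m * n).divisors := by
    intro e he
    obtain ⟨d, hd, rfl⟩ := mem_image.1 he
    rw [Nat.mem_divisors] at hd ⊢
    exact ⟨mul_dvd_mul_right hd.1 n, mul_ne_zero hd.2 hn⟩
  calc n * sigma m = ∑ e ∈ m.divisors.image (· * n), e := by
        rw [sigma, mul_sum, sum_image hinj]
        exact sum_congr rfl fun d _ => mul_comm n d
    _ ≤ sigma (m * n) := sum_le_sum_of_subset hsub

lemma sigma_sq_lt_sq_sigma {n : ℕ} (hn : 2 ≤ n) : sigma (n ^ 2) < sigma n ^ 2 := by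
  set D := n.divisors
  have hnD : n ∈ D := Nat.mem_divisors_self n (by omega)
  have h1D : 1 ∈ D := Nat.one_mem_divisors.2 (by omega)
  have hmem : (n, 1) ∈ D ×ˢ D := mem_product.2 ⟨hnD, h1D⟩
  set S := (D ×ˢ D).erase (n, 1)
  have hcover : (n ^ 2).divisors = S.image fun p => p.1 * p.2 := by
    have h1n : (1, n) ∈ S :=
      mem_erase.2 ⟨by rw [Ne, Prod.ext_iff]; omega, mem_product.2 ⟨h1D, hnD⟩⟩
    rw [sq, Nat.divisors_mul, mul_def, ← insert_erase hmem, image_insert,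
      insert_eq_of_mem (mem_image.2 ⟨(1, n), h1n, by simp⟩)]
  calc sigma (n ^ 2) = ∑ e ∈ S.image fun p => p.1 * p.2, e := by rw [sigma, hcover]
    _ ≤ ∑ p ∈ S, p.1 * p.2 := sum_image_le_of_nonneg fun _ _ => Nat.zero_le _
    _ < ∑ p ∈ S, p.1 * p.2 + n * 1 := by omega
    _ = ∑ p ∈ D ×ˢ D, p.1 * p.2 := sum_erase_add _ _ hmem
    _ = sigma n ^ 2 := by rw [sq, sigma, sum_mul_sum, sum_product]

lemma Ir_nonneg (n : ℕ) : 0 ≤ Ir n := by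
  unfold Ir
  positivity

lemma Ir_one : Ir 1 = 1 := by
  simp [Ir, sigma]

lemma Ir_prime {p : ℕ} (hp : p.Prime) : Ir p = 1 + 1 / p := by
  have hp0 : (p : ℝ) ≠ 0 := by exact_mod_cast hp.ne_zero
  rw [Ir, sigma_prime hp]
  push_cast
  field_simp

lemma one_lt_Ir_prime {p : ℕ} (hp : p.Prime) : 1 < Ir p := by
  rw [Ir_prime hp]
  have : (0 : ℝ) < p := by exact_mod_cast hp.pos
  simp [this]

lemma Ir_prime_le_of_le {p a : ℕ} (hp : p.Prime) (ha : 0 < a) (hap : a ≤ p) :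
    Ir p ≤ 1 + 1 / a := by
  rw [Ir_prime hp]
  gcongr

lemma Nat.Coprime.Ir_mul {m n : ℕ} (h : m.Coprime n) : Ir (m * n) = Ir m * Ir n := by
  rw [Ir, Ir, Ir, h.sigma_mul]
  push_cast
  exact mul_div_mul_comm _ _ _ _

lemma Ir_eq_two_of_sigma_eq {N : ℕ} (hN : N ≠ 0) (h : sigma N = 2 * N) : Ir N = 2 := by
  have hN' : (N : ℝ) ≠ 0 := by exact_mod_cast hN
  rw [Ir, h]
  push_cast
  field_simp

lemma Ir_le_Ir_mul (m : ℕ) {n : ℕ} (hn : n ≠ 0) : Ir m ≤ Ir (m * n) := by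
  rcases Nat.eq_zero_or_pos m with rfl | hm
  · simp
  have hle : (n : ℝ) * sigma m ≤ sigma (m * n) := by exact_mod_cast mul_sigma_le_sigma_mul m hn
  rw [Ir, Ir, div_le_div_iff₀ (by positivity) (by positivity)]
  push_cast
  calc (sigma m : ℝ) * (m * n) = (n * sigma m) * m := by ring
    _ ≤ sigma (m * n) * m := by gcongr

lemma Ir_sq_lt_sq_Ir {n : ℕ} (hn : 2 ≤ n) : Ir (n ^ 2) < Ir n ^ 2 := by
  have hn0 : (0 : ℝ) < (n : ℝ) ^ 2 := by positivity
  rw [Ir, Ir, div_pow]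
  push_cast
  exact div_lt_div_of_pos_right (by exact_mod_cast sigma_sq_lt_sq_sigma hn) hn0

theorem stmt8_general (q k n N : ℕ)
    (hq : Nat.Prime q) (hq4 : q % 4 = 1)
    (hco : Nat.Coprime q n) (hN : N = q ^ k * n ^ 2)
    (hodd : Odd N) (hperf : sigma N = 2 * N) (hk : k = 1) :
    1 < Ir q ∧ Ir q ≤ 6 / 5 ∧ (6 : ℝ) / 5 < Real.sqrt (5 / 3) ∧ Real.sqrt (5 / 3) < Ir n ∧ Ir n < 2 := by
  subst hk hN
  have hn0 : n ≠ 0 := by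
    rintro rfl
    simp at hodd
  have hIq_lt : 1 < Ir q := one_lt_Ir_prime hq
  have hIq_le : Ir q ≤ 6 / 5 := by
    have hq5 : 5 ≤ q := by
      have := hq.two_le
      omega
    convert Ir_prime_le_of_le hq (by norm_num) hq5 using 1
    norm_num
  have hsplit : Ir q * Ir (n ^ 2) = 2 := by
    rw [← (hco.pow_right 2).Ir_mul, ← pow_one q]
    exact Ir_eq_two_of_sigma_eq hodd.pos.ne' hperf
  have hn2 : 2 ≤ n := by
    by_contra! h
    obtain rfl : n = 1 := by omega
    rw [one_pow, Ir_one] at hsplit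
    linarith
  have hIn2_lower : 5 / 3 ≤ Ir (n ^ 2) := by nlinarith [Ir_nonneg (n ^ 2)]
  have hIn2_upper : Ir (n ^ 2) < 2 := by nlinarith [Ir_nonneg (n ^ 2)]
  refine ⟨hIq_lt, hIq_le, ?_, ?_, ?_⟩
  · rw [Real.lt_sqrt (by norm_num)]
    norm_num
  · calc Real.sqrt (5 / 3) < Real.sqrt (Ir n ^ 2) :=
          Real.sqrt_lt_sqrt (by norm_num) (hIn2_lower.trans_lt (Ir_sq_lt_sq_Ir hn2))
      _ = Ir n := Real.sqrt_sq (Ir_nonneg n)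
  · exact (sq n ▸ Ir_le_Ir_mul n hn0).trans_lt hIn2_upper

theorem stmt8 (q k n N : ℕ)
    (hq : Nat.Prime q) (hq4 : q % 4 = 1) (hk4 : k % 4 = 1)
    (hco : Nat.Coprime q n) (hN : N = q ^ k * n ^ 2)
    (hodd : Odd N) (hperf : sigma N = 2 * N) (hk : k = 1) :
    1 < Ir q ∧ Ir q ≤ 6 / 5 ∧ (6 : ℝ) / 5 < Real.sqrt (5 / 3) ∧ Real.sqrt (5 / 3) < Ir n ∧ Ir n < 2 :=
  stmt8_general q k n N hq hq4 hco hN hodd hperf hk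
end
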